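/- arXiv:1402.1704 — 3 statements merged into one kernel-verified Lean document; each statement's English description precedes it below -/
import Mathlib

section
/- Let G and H be groups, X a topological space with a continuous action of G (for each g ∈ G the map x ↦ g • x is continuous), and Y a Hausdorff topological space with an action of H which is properly discontinuous: for all compact sets B, C ⊆ Y the set {h ∈ H : (h • B) ∩ C ≠ ∅} is finite. Let φ : G → H be an injective group homomorphism and F : X → Y a continuous map with F(g • x) = φ(g) • F(x) for all g ∈ G and x ∈ X. If there is a compact set K ⊆ X with ⋃_{g∈G} g • K = X, then for every compact set B ⊆ Y the preimage F⁻¹(B) is compact. -/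
open Pointwise

/-- Abstract form of the implication (1) ⇒ (2) in Proposition 2.3 ('cannonmap'):
if `φ` is injective and the `G`-action on `X` is cocompact, then the equivariant
continuous map `F : X → Y` is proper. -/
theorem proper_of_injective
    {G H : Type*} [Group G] [Group H]
    {X : Type*} [TopologicalSpace X] [MulAction G X]
    {Y : Type*} [TopologicalSpace Y] [T2Space Y] [MulAction H Y]
    (hcontX : ∀ g : G, Continuous (fun x : X => g • x))
    (hproper_disc : ∀ B C : Set Y, IsCompact B → IsCompact C →
      Set.Finite {h : H | (h • B) ∩ C ≠ ∅})
    (φ : G →* H) (hφ : Function.Injective φ)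
    (F : X → Y) (hF : Continuous F)
    (hequiv : ∀ (g : G) (x : X), F (g • x) = φ g • F x)
    (K : Set X) (hK : IsCompact K) (hcover : ⋃ g : G, g • K = Set.univ) :
    ∀ B : Set Y, IsCompact B → IsCompact (F ⁻¹' B) := by
  intro B hB
  -- the set of group elements moving F '' K to meet B
  have hFK : IsCompact (F '' K) := hK.image hF
  have hfin : Set.Finite {h : H | (h • (F '' K)) ∩ B ≠ ∅} :=
    hproper_disc (F '' K) B hFK hB
  set S : Set G := {g : G | (φ g • (F '' K)) ∩ B ≠ ∅} with hS
  have hSfin : S.Finite := by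
    have : S ⊆ φ ⁻¹' {h : H | (h • (F '' K)) ∩ B ≠ ∅} := fun g hg => hg
    exact Set.Finite.preimage (Set.injOn_of_injective hφ)
      hfin |>.subset this
  -- the big compact set
  have hbig : IsCompact (⋃ g ∈ S, g • K) := by
    apply hSfin.isCompact_biUnion
    intro g _
    exact hK.image (hcontX g)
  apply hbig.of_isClosed_subset (hB.isClosed.preimage hF)
  intro x hx
  have hxK : x ∈ ⋃ g : G, g • K := by rw [hcover]; trivial
  obtain ⟨_, ⟨g, rfl⟩, k, hk, rfl⟩ := hxK
  have hgS : g ∈ S := by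
    refine Set.nonempty_iff_ne_empty.mp ⟨F (g • k), ?_, hx⟩
    exact ⟨F k, Set.mem_image_of_mem F hk, (hequiv g k).symm⟩
  exact Set.mem_biUnion hgS ⟨k, hk, rfl⟩
end

section
/- Let E be a finite type, let k be a natural number, and let A : Fin k → E → ℤ be a family of integer linear forms. If there exists x : E → ℝ with x(e) ≥ 0 for all e ∈ E, x not identically zero, and ∑_{e ∈ E} A(i)(e) · x(e) = 0 for every i, then there exists y : E → ℤ with y(e) ≥ 0 for all e ∈ E, y not identically zero, and ∑_{e ∈ E} A(i)(e) · y(e) = 0 for every i. -/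
/-!
Write the system as a relation `∑ e, x e • v e = 0` among the integer columns `v e`. The columns
indexed by the support of a nonzero real relation are linearly dependent over `ℝ`, hence over `ℤ`,
since linear independence is preserved by the base change `ℤ → ℝ`. If the resulting integer
relation `z` has constant sign, `z` or `-z` is the answer. Otherwise, moving `x` along `z` until a
first coordinate vanishes gives a nonnegative real relation with strictly smaller support, which
is still nonzero because `z` has a positive entry; conclude by well-founded induction on the
support.
-/

open Finset Function

section

variable {E : Type*} [Fintype E]

theorem exists_nonneg_add_smul_support_ssubset {𝕜 : Type*} [Field 𝕜] [LinearOrder 𝕜]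
    [IsStrictOrderedRing 𝕜] {x w : E → 𝕜} (hx : 0 ≤ x) (hw : support w ⊆ support x)
    (hneg : ∃ e, w e < 0) :
    ∃ t : 𝕜, 0 ≤ t ∧ 0 ≤ x + t • w ∧ support (x + t • w) ⊂ support x := by
  obtain ⟨e₀, he₀, hmin⟩ := exists_min_image ({e | w e < 0} : Finset E) (fun e => x e / -w e)
    (by simpa [Finset.Nonempty] using hneg)
  simp only [mem_filter, mem_univ, true_and] at he₀ hmin
  set t := x e₀ / -w e₀
  have ht : 0 ≤ t := div_nonneg (hx e₀) (neg_nonneg.2 he₀.le)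
  refine ⟨t, ht, fun e => ?_, ?_⟩
  · rcases lt_or_ge (w e) 0 with hwe | hwe
    · have := (le_div_iff₀ (neg_pos.2 hwe)).1 (hmin e hwe)
      simp only [Pi.zero_apply, Pi.add_apply, Pi.smul_apply, smul_eq_mul]
      linarith
    · exact add_nonneg (hx e) (mul_nonneg ht hwe)
  · refine (Set.ssubset_iff_of_subset (support_subset_iff'.2 fun e hxe => ?_)).2
      ⟨e₀, hw he₀.ne, ?_⟩
    · simp [notMem_support.1 hxe, notMem_support.1 (mt (@hw e) hxe)]
    · simp only [mem_support, Pi.add_apply, Pi.smul_apply, smul_eq_mul, t, not_not]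
      field_simp [he₀.ne]
      ring

variable {ι : Type*} [Finite ι]

theorem exists_int_relation_support_subset (v : E → ι → ℤ) {x : E → ℝ} (hx : x ≠ 0)
    (hxv : ∑ e, x e • (Int.cast ∘ v e : ι → ℝ) = 0) :
    ∃ z : E → ℤ, z ≠ 0 ∧ support z ⊆ support x ∧ ∑ e, z e • v e = 0 := by
  let s : Finset E := {e | x e ≠ 0}
  have hreal : ¬LinearIndepOn ℝ (fun e => algebraMap ℤ ℝ ∘ v e) s := by
    obtain ⟨e, he⟩ := Function.ne_iff.1 hx
    refine not_linearIndepOn_finset_iff.2 ⟨x, ?_, e, by simpa [s] using he, he⟩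
    rw [← hxv]
    exact sum_subset (subset_univ s) fun e _ he => by simp_all [s]
  have hint : ¬LinearIndepOn ℤ v s := by
    rwa [LinearIndepOn, ← linearIndependent_algebraMap_comp_iff (S := ℝ)]
  obtain ⟨f, hf, e, he, hfe⟩ := not_linearIndepOn_finset_iff.1 hint
  refine ⟨fun e => if x e ≠ 0 then f e else 0, Function.ne_iff.2 ⟨e, ?_⟩, ?_, ?_⟩
  · simp_all [s]
  · exact fun e => by simp +contextual
  · rw [← hf, sum_filter]
    simp only [ite_smul, zero_smul]

theorem exists_nonneg_int_relation (v : E → ι → ℤ) {x : E → ℝ} (hx₀ : 0 ≤ x) (hx : x ≠ 0)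
    (hxv : ∑ e, x e • (Int.cast ∘ v e : ι → ℝ) = 0) :
    ∃ z : E → ℤ, 0 ≤ z ∧ z ≠ 0 ∧ ∑ e, z e • v e = 0 := by
  induction hs : support x using WellFoundedLT.induction generalizing x with
  | _ s ih =>
    subst hs
    obtain ⟨z, hz, hzx, hzv⟩ := exists_int_relation_support_subset v hx hxv
    by_cases hpos : 0 ≤ z
    · exact ⟨z, hpos, hz, hzv⟩
    by_cases hneg : z ≤ 0
    · refine ⟨-z, neg_nonneg.2 hneg, neg_ne_zero.2 hz, ?_⟩
      simp only [Pi.neg_apply, neg_smul, sum_neg_distrib, hzv, neg_zero]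
    obtain ⟨e₁, he₁⟩ : ∃ e, (z e : ℝ) < 0 := by simpa [Pi.le_def] using hpos
    obtain ⟨e₂, he₂⟩ : ∃ e, 0 < (z e : ℝ) := by simpa [Pi.le_def] using hneg
    have hzv' : ∑ e, (z e : ℝ) • (Int.cast ∘ v e : ι → ℝ) = 0 := by
      ext i
      simpa [Finset.sum_apply] using congr_arg (Int.cast (R := ℝ)) (congr_fun hzv i)
    obtain ⟨t, ht, hxt, hsupp⟩ := exists_nonneg_add_smul_support_ssubset hx₀
      (w := fun e => (z e : ℝ)) (by simpa using hzx) ⟨e₁, he₁⟩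
    refine ih _ hsupp hxt (Function.ne_iff.2 ⟨e₂, ne_of_gt ?_⟩) ?_ rfl
    · have : 0 < x e₂ := (hx₀ e₂).lt_of_ne' (hzx (by simpa using he₂.ne'))
      simp only [Pi.zero_apply, Pi.add_apply, Pi.smul_apply, smul_eq_mul]
      positivity
    · simp only [Pi.add_apply, Pi.smul_apply, smul_eq_mul, add_smul, mul_smul, sum_add_distrib,
        ← smul_sum, hxv, hzv', smul_zero, add_zero]

end

/-- General form of Lemma 'solution1': a finite homogeneous system of linear equations
with integer coefficients that admits a nontrivial nonnegative real solution also
admits a nontrivial nonnegative integral solution. -/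
theorem integral_solution_of_real_solution
    {E : Type*} [Fintype E] {k : ℕ} (A : Fin k → E → ℤ)
    (hreal : ∃ x : E → ℝ, (∀ e, 0 ≤ x e) ∧ x ≠ 0 ∧
      ∀ i : Fin k, ∑ e : E, (A i e : ℝ) * x e = 0) :
    ∃ y : E → ℤ, (∀ e, 0 ≤ y e) ∧ y ≠ 0 ∧
      ∀ i : Fin k, ∑ e : E, A i e * y e = 0 := by
  obtain ⟨x, hx₀, hx, hAx⟩ := hreal
  obtain ⟨y, hy₀, hy, hAy⟩ := exists_nonneg_int_relation (fun e i => A i e) hx₀ hx <| by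
    ext i
    simpa [Finset.sum_apply, mul_comm] using hAx i
  exact ⟨y, hy₀, hy, fun i => by simpa [Finset.sum_apply, mul_comm] using congr_fun hAy i⟩
end

section
/- Fix real numbers ℓ > 0 and q ∈ (0,1], and let f and g be two q-regular densities on [0,ℓ]. Then there exists a homeomorphism ψ of [0,ℓ] onto itself such that the pushforward under ψ of the measure with density f with respect to Lebesgue measure restricted to [0,ℓ] equals the measure with density g with respect to Lebesgue measure restricted to [0,ℓ], and |ψ(t) − t| ≤ 2·(1−q)·ℓ/q for every t ∈ [0,ℓ]. -/
/-!
Let `F`, `G` be the primitives of `f`, `g` from `0` (so `χ_f = ℓ F`, `χ_g = ℓ G`) and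
`ψ = G⁻¹ ∘ F`. The lower regularity bound makes `F` and `G` increasing bijections
`[0, ℓ] → [0, 1]` growing at rate at least `q / ℓ`. Since `ψ` is increasing, it carries `[0, x]`
onto `[0, ψ x]`, and these have masses `F x = G (ψ x)`: the two distribution functions agree.
For the displacement, `F t` and `G t` both lie in `[q t / ℓ, 1 - q (ℓ - t) / ℓ]`, an interval of
length `1 - q`; as `G (ψ t) = F t`, the growth rate of `G` gives `q |ψ t - t| / ℓ ≤ 1 - q`.
-/

open MeasureTheory

/-- `f` is a `q`-regular density on `[0,ℓ]`: it is continuous, has total integral one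
over `[0,ℓ]`, and `q·(b−a)/ℓ ≤ ∫_a^b f ≤ (b−a)/(q·ℓ)` for all `0 ≤ a ≤ b ≤ ℓ`. -/
def IsRegularDensity (ℓ q : ℝ) (f : ℝ → ℝ) : Prop :=
  Continuous f ∧ (∫ s in (0:ℝ)..ℓ, f s) = 1 ∧
    ∀ a b : ℝ, 0 ≤ a → a ≤ b → b ≤ ℓ →
      q * (b - a) / ℓ ≤ (∫ s in a..b, f s) ∧ (∫ s in a..b, f s) ≤ (b - a) / (q * ℓ)

open Set

theorem MonotoneOn.continuousOn_Icc_of_surjOn {α β : Type*} [LinearOrder α] [TopologicalSpace α]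
    [OrderTopology α] [LinearOrder β] [TopologicalSpace β] [OrderTopology β] [DenselyOrdered β]
    {f : α → β} {a b : α} {c d : β} (hab : a ≤ b) (hf : MonotoneOn f (Icc a b))
    (hmaps : MapsTo f (Icc a b) (Icc c d)) (hsurj : SurjOn f (Icc a b) (Icc c d)) :
    ContinuousOn f (Icc a b) := by
  -- clamping to `[a, b]` makes `f` monotone and surjective on all of `α`
  let φ : α → Icc c d := fun x => ⟨f (projIcc a b hab x), hmaps (projIcc a b hab x).2⟩
  have hφ_mono : Monotone φ := fun x y hxy =>
    hf (projIcc a b hab x).2 (projIcc a b hab y).2 (monotone_projIcc hab hxy)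
  have hφ_surj : Function.Surjective φ := by
    rintro ⟨y, hy⟩
    obtain ⟨x, hx, rfl⟩ := hsurj hy
    exact ⟨x, Subtype.ext (by simp [φ, projIcc_of_mem hab hx])⟩
  refine (continuous_subtype_val.comp (hφ_mono.continuous_of_surjective hφ_surj)).continuousOn.congr
    fun x hx => ?_
  simp [φ, projIcc_of_mem hab hx]

namespace MeasureTheory.Measure

theorem ext_of_Iic_of_measure_compl_Icc {μ ν : Measure ℝ} [IsFiniteMeasure μ]
    [IsFiniteMeasure ν] {a b : ℝ} (hμ : μ (Icc a b)ᶜ = 0) (hν : ν (Icc a b)ᶜ = 0)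
    (h : ∀ x ∈ Icc a b, μ (Iic x) = ν (Iic x)) : μ = ν := by
  refine ext_of_Iic μ ν fun x => ?_
  rcases le_or_gt a (min x b) with hax | hxa
  · have hIic : Iic x ∩ Icc a b = Iic (min x b) ∩ Icc a b := by
      ext t
      simp only [mem_inter_iff, mem_Iic, mem_Icc, le_min_iff]
      tauto
    rw [← measure_inter_conull hμ, ← measure_inter_conull hν, hIic, measure_inter_conull hμ,
      measure_inter_conull hν, h _ ⟨hax, min_le_right x b⟩]
  · have hnull : Iic x ⊆ (Icc a b)ᶜ := fun t ht ht' =>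
      hxa.not_ge (le_min (ht'.1.trans ht) (ht'.1.trans ht'.2))
    rw [measure_mono_null hnull hμ, measure_mono_null hnull hν]

theorem map_apply_Iic_of_strictMonoOn {μ : Measure ℝ} {φ : ℝ → ℝ} {s : Set ℝ}
    (hμ : μ sᶜ = 0) (hφ : StrictMonoOn φ s) (hφm : AEMeasurable φ μ) {x : ℝ} (hx : x ∈ s) :
    μ.map φ (Iic (φ x)) = μ (Iic x) := by
  have hpre : φ ⁻¹' Iic (φ x) ∩ s = Iic x ∩ s := by
    ext t
    simp only [mem_inter_iff, mem_preimage, mem_Iic]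
    exact ⟨fun ⟨ht, hts⟩ => ⟨(hφ.le_iff_le hts hx).1 ht, hts⟩,
      fun ⟨ht, hts⟩ => ⟨(hφ.le_iff_le hts hx).2 ht, hts⟩⟩
  rw [map_apply_of_aemeasurable hφm measurableSet_Iic, ← measure_inter_conull hμ, hpre,
    measure_inter_conull hμ]

end MeasureTheory.Measure

noncomputable def primitive (f : ℝ → ℝ) (t : ℝ) : ℝ := ∫ s in (0:ℝ)..t, f s

theorem primitive_zero (f : ℝ → ℝ) : primitive f 0 = 0 := intervalIntegral.integral_same

theorem Continuous.primitive {f : ℝ → ℝ} (hf : Continuous f) : Continuous (primitive f) :=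
  intervalIntegral.continuous_primitive (hf.intervalIntegrable ·) 0

theorem primitive_sub_primitive {f : ℝ → ℝ} (hf : Continuous f) (a b : ℝ) :
    primitive f b - primitive f a = ∫ s in a..b, f s :=
  intervalIntegral.integral_interval_sub_left (hf.intervalIntegrable _ _)
    (hf.intervalIntegrable _ _)

theorem nonneg_of_monotoneOn_primitive {f : ℝ → ℝ} (hf : Continuous f) {a b : ℝ} (hab : a < b)
    (hmono : MonotoneOn (primitive f) (Icc a b)) {t : ℝ} (ht : t ∈ Icc a b) : 0 ≤ f t := by
  have hderiv : HasDerivAt (primitive f) (f t) t :=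
    intervalIntegral.integral_hasDerivAt_right (hf.intervalIntegrable _ _)
      hf.aestronglyMeasurable.stronglyMeasurableAtFilter hf.continuousAt
  rw [← hderiv.hasDerivWithinAt.derivWithin (uniqueDiffOn_Icc hab t ht)]
  exact hmono.derivWithin_nonneg

noncomputable def densityMeasure (ℓ : ℝ) (f : ℝ → ℝ) : Measure ℝ :=
  (volume.restrict (Icc 0 ℓ)).withDensity fun t => ENNReal.ofReal (f t)

section densityMeasure

variable {ℓ : ℝ} {f : ℝ → ℝ}

theorem densityMeasure_compl_Icc : densityMeasure ℓ f (Icc 0 ℓ)ᶜ = 0 := by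
  rw [densityMeasure, withDensity_apply _ measurableSet_Icc.compl,
    Measure.restrict_restrict measurableSet_Icc.compl, compl_inter_self, Measure.restrict_empty,
    lintegral_zero_measure]

theorem isFiniteMeasure_densityMeasure (hf : Continuous f) :
    IsFiniteMeasure (densityMeasure ℓ f) :=
  isFiniteMeasure_withDensity_ofReal hf.integrableOn_Icc.hasFiniteIntegral

theorem densityMeasure_Iic (hf : Continuous f) (hf_nonneg : ∀ t ∈ Icc 0 ℓ, 0 ≤ f t) {x : ℝ}
    (hx : x ∈ Icc 0 ℓ) : densityMeasure ℓ f (Iic x) = ENNReal.ofReal (primitive f x) := by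
  have hIic : Iic x ∩ Icc 0 ℓ = Icc 0 x := by
    ext t
    simp only [mem_inter_iff, mem_Iic, mem_Icc]
    exact ⟨fun ⟨htx, ht0, _⟩ => ⟨ht0, htx⟩, fun ⟨ht0, htx⟩ => ⟨htx, ht0, htx.trans hx.2⟩⟩
  have hf_ae_nonneg : 0 ≤ᵐ[volume.restrict (Icc 0 x)] f := by
    filter_upwards [ae_restrict_mem measurableSet_Icc] with t ht
    exact hf_nonneg t ⟨ht.1, ht.2.trans hx.2⟩
  rw [densityMeasure, withDensity_apply _ measurableSet_Iic,
    Measure.restrict_restrict measurableSet_Iic, hIic,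
    ← ofReal_integral_eq_lintegral_ofReal hf.integrableOn_Icc hf_ae_nonneg, primitive,
    intervalIntegral.integral_of_le hx.1, integral_Icc_eq_integral_Ioc]

end densityMeasure

namespace IsRegularDensity

variable {ℓ q : ℝ} {f g : ℝ → ℝ}

theorem mul_sub_div_le_primitive_sub (hf : IsRegularDensity ℓ q f) {a b : ℝ} (ha : 0 ≤ a)
    (hab : a ≤ b) (hb : b ≤ ℓ) : q * (b - a) / ℓ ≤ primitive f b - primitive f a := by
  rw [primitive_sub_primitive hf.1]
  exact (hf.2.2 a b ha hab hb).1

theorem strictMonoOn_primitive (hf : IsRegularDensity ℓ q f) (hℓ : 0 < ℓ) (hq : 0 < q) :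
    StrictMonoOn (primitive f) (Icc 0 ℓ) := fun a ha b hb hab => by
  have hinc := hf.mul_sub_div_le_primitive_sub ha.1 hab.le hb.2
  have hpos : 0 < q * (b - a) / ℓ := div_pos (mul_pos hq (sub_pos.2 hab)) hℓ
  linarith

theorem nonneg (hf : IsRegularDensity ℓ q f) (hℓ : 0 < ℓ) (hq : 0 < q) {t : ℝ}
    (ht : t ∈ Icc 0 ℓ) : 0 ≤ f t :=
  nonneg_of_monotoneOn_primitive hf.1 hℓ (hf.strictMonoOn_primitive hℓ hq).monotoneOn ht

theorem bijOn_primitive (hf : IsRegularDensity ℓ q f) (hℓ : 0 < ℓ) (hq : 0 < q) :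
    BijOn (primitive f) (Icc 0 ℓ) (Icc 0 1) := by
  have hmono := hf.strictMonoOn_primitive hℓ hq
  have himage : primitive f '' Icc 0 ℓ = Icc 0 1 := by
    rw [hf.1.primitive.continuousOn.image_Icc_of_monotoneOn hℓ.le hmono.monotoneOn,
      primitive_zero, primitive, hf.2.1]
  exact himage ▸ hmono.injOn.bijOn_image

theorem primitive_mem_Icc (hf : IsRegularDensity ℓ q f) {t : ℝ} (ht : t ∈ Icc 0 ℓ) :
    q * t / ℓ ≤ primitive f t ∧ primitive f t ≤ 1 - q * (ℓ - t) / ℓ := by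
  have h0 := hf.mul_sub_div_le_primitive_sub le_rfl ht.1 ht.2
  have h1 := hf.mul_sub_div_le_primitive_sub ht.1 ht.2 le_rfl
  rw [primitive_zero, sub_zero, sub_zero] at h0
  rw [primitive, hf.2.1] at h1
  exact ⟨h0, by linarith⟩

theorem abs_primitive_sub_primitive_le (hf : IsRegularDensity ℓ q f)
    (hg : IsRegularDensity ℓ q g) (hℓ : 0 < ℓ) {t : ℝ} (ht : t ∈ Icc 0 ℓ) :
    |primitive f t - primitive g t| ≤ 1 - q := by
  obtain ⟨hf₀, hf₁⟩ := hf.primitive_mem_Icc ht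
  obtain ⟨hg₀, hg₁⟩ := hg.primitive_mem_Icc ht
  have hsum : q * t / ℓ + q * (ℓ - t) / ℓ = q := by field_simp; ring
  exact abs_sub_le_iff.2 ⟨by linarith, by linarith⟩

theorem mul_abs_sub_div_le (hf : IsRegularDensity ℓ q f) {x y : ℝ} (hx : x ∈ Icc 0 ℓ)
    (hy : y ∈ Icc 0 ℓ) : q * |y - x| / ℓ ≤ |primitive f y - primitive f x| := by
  rcases le_total x y with hxy | hyx
  · rw [abs_of_nonneg (sub_nonneg.2 hxy)]
    exact (hf.mul_sub_div_le_primitive_sub hx.1 hxy hy.2).trans (le_abs_self _)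
  · rw [abs_sub_comm, abs_of_nonneg (sub_nonneg.2 hyx), abs_sub_comm]
    exact (hf.mul_sub_div_le_primitive_sub hy.1 hyx hx.2).trans (le_abs_self _)

end IsRegularDensity

noncomputable def transportMap (ℓ : ℝ) (f g : ℝ → ℝ) : ℝ → ℝ :=
  Function.invFunOn (primitive g) (Icc 0 ℓ) ∘ primitive f

section transportMap

variable {ℓ q : ℝ} {f g : ℝ → ℝ}

theorem bijOn_transportMap
    (hf : IsRegularDensity ℓ q f) (hg : IsRegularDensity ℓ q g) (hℓ : 0 < ℓ) (hq : 0 < q) :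
    BijOn (transportMap ℓ f g) (Icc 0 ℓ) (Icc 0 ℓ) := by
  have hG := hg.bijOn_primitive hℓ hq
  exact (hG.invOn_invFunOn.symm.bijOn hG.surjOn.mapsTo_invFunOn hG.mapsTo).comp
    (hf.bijOn_primitive hℓ hq)

theorem primitive_transportMap
    (hf : IsRegularDensity ℓ q f) (hg : IsRegularDensity ℓ q g) (hℓ : 0 < ℓ) (hq : 0 < q)
    {t : ℝ} (ht : t ∈ Icc 0 ℓ) :
    primitive g (transportMap ℓ f g t) = primitive f t :=
  (hg.bijOn_primitive hℓ hq).invOn_invFunOn.2 ((hf.bijOn_primitive hℓ hq).mapsTo ht)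

theorem strictMonoOn_transportMap
    (hf : IsRegularDensity ℓ q f) (hg : IsRegularDensity ℓ q g) (hℓ : 0 < ℓ) (hq : 0 < q) :
    StrictMonoOn (transportMap ℓ f g) (Icc 0 ℓ) :=
  fun x hx y hy hxy => by
    have hmaps := (bijOn_transportMap hf hg hℓ hq).mapsTo
    rw [← (hg.strictMonoOn_primitive hℓ hq).lt_iff_lt (hmaps hx) (hmaps hy),
      primitive_transportMap hf hg hℓ hq hx, primitive_transportMap hf hg hℓ hq hy]
    exact hf.strictMonoOn_primitive hℓ hq hx hy hxy

theorem continuousOn_transportMap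
    (hf : IsRegularDensity ℓ q f) (hg : IsRegularDensity ℓ q g) (hℓ : 0 < ℓ) (hq : 0 < q) :
    ContinuousOn (transportMap ℓ f g) (Icc 0 ℓ) :=
  have hbij := bijOn_transportMap hf hg hℓ hq
  (strictMonoOn_transportMap hf hg hℓ hq).monotoneOn.continuousOn_Icc_of_surjOn hℓ.le
    hbij.mapsTo hbij.surjOn

theorem map_densityMeasure_transportMap
    (hf : IsRegularDensity ℓ q f) (hg : IsRegularDensity ℓ q g) (hℓ : 0 < ℓ) (hq : 0 < q) :
    (densityMeasure ℓ f).map (transportMap ℓ f g) = densityMeasure ℓ g := by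
  have := isFiniteMeasure_densityMeasure (ℓ := ℓ) hf.1
  have := isFiniteMeasure_densityMeasure (ℓ := ℓ) hg.1
  have hbij := bijOn_transportMap hf hg hℓ hq
  have hmeas : AEMeasurable (transportMap ℓ f g) (densityMeasure ℓ f) :=
    ((continuousOn_transportMap hf hg hℓ hq).aemeasurable measurableSet_Icc).mono_ac
      (withDensity_absolutelyContinuous _ _)
  refine Measure.ext_of_Iic_of_measure_compl_Icc ?_ densityMeasure_compl_Icc fun y hy => ?_
  · rw [Measure.map_apply_of_aemeasurable hmeas measurableSet_Icc.compl]
    exact measure_mono_null (fun t ht ht' => ht (hbij.mapsTo ht')) densityMeasure_compl_Icc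
  · obtain ⟨x, hx, rfl⟩ := hbij.surjOn hy
    rw [Measure.map_apply_Iic_of_strictMonoOn densityMeasure_compl_Icc
        (strictMonoOn_transportMap hf hg hℓ hq) hmeas hx,
      densityMeasure_Iic hf.1 (fun _ => hf.nonneg hℓ hq) hx,
      densityMeasure_Iic hg.1 (fun _ => hg.nonneg hℓ hq) hy,
      primitive_transportMap hf hg hℓ hq hx]

theorem abs_transportMap_sub_le
    (hf : IsRegularDensity ℓ q f) (hg : IsRegularDensity ℓ q g) (hℓ : 0 < ℓ) (hq : 0 < q)
    {t : ℝ} (ht : t ∈ Icc 0 ℓ) :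
    |transportMap ℓ f g t - t| ≤ (1 - q) * ℓ / q := by
  have hmoved := hg.mul_abs_sub_div_le ht ((bijOn_transportMap hf hg hℓ hq).mapsTo ht)
  rw [primitive_transportMap hf hg hℓ hq ht] at hmoved
  have hbound := hmoved.trans (hf.abs_primitive_sub_primitive_le hg hℓ ht)
  rw [div_le_iff₀ hℓ] at hbound
  rwa [le_div_iff₀ hq, mul_comm]

end transportMap

/-- One-dimensional transport statement underlying Proposition 'matching': two
`q`-regular densities on `[0,ℓ]` are matched by a homeomorphism of `[0,ℓ]` moving
every point a distance at most `2·(1−q)·ℓ/q`. -/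
theorem regularDensity_matching
    (ℓ q : ℝ) (hℓ : 0 < ℓ) (hq : q ∈ Set.Ioc (0:ℝ) 1)
    (f g : ℝ → ℝ) (hf : IsRegularDensity ℓ q f) (hg : IsRegularDensity ℓ q g) :
    ∃ ψ : ℝ → ℝ,
      Set.BijOn ψ (Set.Icc 0 ℓ) (Set.Icc 0 ℓ) ∧
      ContinuousOn ψ (Set.Icc 0 ℓ) ∧
      Measure.map ψ ((volume.restrict (Set.Icc 0 ℓ)).withDensity
          (fun t => ENNReal.ofReal (f t))) =
        (volume.restrict (Set.Icc 0 ℓ)).withDensity (fun t => ENNReal.ofReal (g t)) ∧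
      ∀ t ∈ Set.Icc (0:ℝ) ℓ, |ψ t - t| ≤ 2 * (1 - q) * ℓ / q := by
  obtain ⟨hq₀, hq₁⟩ := hq
  refine ⟨transportMap ℓ f g, bijOn_transportMap hf hg hℓ hq₀,
    continuousOn_transportMap hf hg hℓ hq₀, map_densityMeasure_transportMap hf hg hℓ hq₀,
    fun t ht => ?_⟩
  calc |transportMap ℓ f g t - t| ≤ (1 - q) * ℓ / q := abs_transportMap_sub_le hf hg hℓ hq₀ ht
    _ ≤ 2 * (1 - q) * ℓ / q := by gcongr; nlinarith
end
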